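/- For every u ∈ C^∞(cl B⁵; ℂ), every r ∈ [0,1] and every ω ∈ S⁴: r⁴|u(rω)|² ≤ 2|u(ω)|² + ∫₀¹ s⁴ |∇u(sω)|² ds, where |∇u|² := Σ_{i=1}^{5} |∂_i u|². -/

import Mathlib

/-!
Along the ray `s ↦ sω`, the derivative of `s⁴‖u(sω)‖²` is `4s³‖u‖² + 2s⁴⟪u, ∂_ω u⟫`. Since
`s⁴ ≤ 4s³` on `[0, 1]`, completing the square bounds it below by `-s⁴‖∂_ω u‖²`, and
`‖∂_ω u‖² ≤ ‖∇u‖²` by Cauchy–Schwarz because `‖ω‖ = 1`. Integrating over `[r, 1]` and enlarging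
the interval to `[0, 1]` concludes.
-/

open MeasureTheory

noncomputable section

abbrev E5 : Type := EuclideanSpace ℝ (Fin 5)

/-- the partial derivative in the `i`-th coordinate direction -/
def pd (i : Fin 5) (f : E5 → ℂ) : E5 → ℂ :=
  fun x => fderiv ℝ f x (EuclideanSpace.single i 1)

open Set

theorem ContinuousLinearMap.norm_apply_sq_le_norm_sq_mul_sum
    {ι F : Type*} [Fintype ι] [DecidableEq ι] [SeminormedAddCommGroup F] [NormedSpace ℝ F]
    (L : EuclideanSpace ℝ ι →L[ℝ] F) (x : EuclideanSpace ℝ ι) :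
    ‖L x‖ ^ 2 ≤ ‖x‖ ^ 2 * ∑ i, ‖L (EuclideanSpace.single i 1)‖ ^ 2 := by
  have hx : L x = ∑ i, x i • L (EuclideanSpace.single i 1) := by
    conv_lhs => rw [← (EuclideanSpace.basisFun ι ℝ).toBasis.sum_repr x]
    simp
  have hnorm : ‖L x‖ ≤ ∑ i, |x i| * ‖L (EuclideanSpace.single i 1)‖ := by
    rw [hx]
    refine (norm_sum_le _ _).trans_eq ?_
    simp [norm_smul]
  calc ‖L x‖ ^ 2 ≤ (∑ i, |x i| * ‖L (EuclideanSpace.single i 1)‖) ^ 2 := by gcongr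
    _ ≤ (∑ i, |x i| ^ 2) * ∑ i, ‖L (EuclideanSpace.single i 1)‖ ^ 2 :=
      Finset.sum_mul_sq_le_sq_mul_sq _ _ _
    _ = ‖x‖ ^ 2 * ∑ i, ‖L (EuclideanSpace.single i 1)‖ ^ 2 := by
      simp [EuclideanSpace.real_norm_sq_eq]

theorem neg_pow_mul_sq_le {n : ℕ} (hn : 1 ≤ n) {s a b : ℝ} (hs0 : 0 ≤ s) (hs1 : s ≤ 1) :
    -(s ^ n * b ^ 2) ≤ n * s ^ (n - 1) * a ^ 2 - s ^ n * (2 * (a * b)) := by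
  have hpow : s ^ n ≤ n * s ^ (n - 1) :=
    calc s ^ n ≤ s ^ (n - 1) := pow_le_pow_of_le_one hs0 hs1 (Nat.sub_le n 1)
      _ ≤ n * s ^ (n - 1) := le_mul_of_one_le_left (pow_nonneg hs0 _) (by exact_mod_cast hn)
  nlinarith [mul_nonneg (pow_nonneg hs0 n) (sq_nonneg (a - b)),
    mul_nonneg (sub_nonneg.mpr hpow) (sq_nonneg a)]

theorem pow_mul_norm_sq_le_add_integral {F : Type*} [NormedAddCommGroup F]
    [InnerProductSpace ℝ F] {g g' : ℝ → F} {G : ℝ → ℝ} {n : ℕ} {r : ℝ} (hn : 1 ≤ n)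
    (hr0 : 0 ≤ r) (hr1 : r ≤ 1) (hcont : ContinuousOn g (Icc r 1))
    (hderiv : ∀ s ∈ Ioo r 1, HasDerivAt g (g' s) s) (hG : ∀ s ∈ Ioo r 1, ‖g' s‖ ^ 2 ≤ G s)
    (hGint : IntegrableOn (fun s => s ^ n * G s) (Icc r 1)) :
    r ^ n * ‖g r‖ ^ 2 ≤ ‖g 1‖ ^ 2 + ∫ s in r..1, s ^ n * G s := by
  have hderiv' : ∀ s ∈ Ioo r 1, HasDerivAt (fun t => t ^ n * ‖g t‖ ^ 2)
      (n * s ^ (n - 1) * ‖g s‖ ^ 2 + s ^ n * (2 * inner ℝ (g s) (g' s))) s := fun s hs =>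
    (hasDerivAt_pow n s).mul (hderiv s hs).norm_sq
  have hbound : ∀ s ∈ Ioo r 1, -(s ^ n * G s) ≤
      n * s ^ (n - 1) * ‖g s‖ ^ 2 + s ^ n * (2 * inner ℝ (g s) (g' s)) := by
    intro s hs
    have hs0 : 0 ≤ s := hr0.trans hs.1.le
    have hinner : -(‖g s‖ * ‖g' s‖) ≤ inner ℝ (g s) (g' s) :=
      neg_le_of_abs_le (abs_real_inner_le_norm _ _)
    calc -(s ^ n * G s) ≤ -(s ^ n * ‖g' s‖ ^ 2) := by
          gcongr; exact hG s hs
      _ ≤ n * s ^ (n - 1) * ‖g s‖ ^ 2 - s ^ n * (2 * (‖g s‖ * ‖g' s‖)) :=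
          neg_pow_mul_sq_le hn hs0 hs.2.le
      _ ≤ n * s ^ (n - 1) * ‖g s‖ ^ 2 + s ^ n * (2 * inner ℝ (g s) (g' s)) := by
          linarith [mul_le_mul_of_nonneg_left hinner (pow_nonneg hs0 n)]
  have hftc : ∫ s in r..1, -(s ^ n * G s) ≤ 1 ^ n * ‖g 1‖ ^ 2 - r ^ n * ‖g r‖ ^ 2 :=
    intervalIntegral.integral_le_sub_of_hasDeriv_right_of_le hr1
      ((continuousOn_pow n).mul (hcont.norm.pow 2))
      (fun s hs => (hderiv' s hs).hasDerivWithinAt) hGint.neg hbound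
  rw [intervalIntegral.integral_neg, one_pow, one_mul] at hftc
  linarith

theorem stmt_1 (u : E5 → ℂ) (hu : ContDiff ℝ (⊤ : ℕ∞) u)
    (r : ℝ) (hr : r ∈ Set.Icc (0 : ℝ) 1)
    (ω : E5) (hω : ω ∈ Metric.sphere (0 : E5) 1) :
    r ^ 4 * ‖u (r • ω)‖ ^ 2 ≤
      2 * ‖u ω‖ ^ 2 + ∫ s in (0 : ℝ)..1, s ^ 4 * ∑ i : Fin 5, ‖pd i u (s • ω)‖ ^ 2 := by
  obtain ⟨hr0, hr1⟩ := hr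
  have hdiff : Differentiable ℝ u := hu.differentiable (by simp)
  have hfd : Continuous (fderiv ℝ u) := hu.continuous_fderiv (by simp)
  have hgrad : Continuous fun s : ℝ => s ^ 4 * ∑ i : Fin 5, ‖pd i u (s • ω)‖ ^ 2 := by
    unfold pd; fun_prop
  have hray : r ^ 4 * ‖u (r • ω)‖ ^ 2 ≤
      ‖u ((1 : ℝ) • ω)‖ ^ 2 + ∫ s in r..1, s ^ 4 * ∑ i : Fin 5, ‖pd i u (s • ω)‖ ^ 2 := by
    refine pow_mul_norm_sq_le_add_integral (g := fun s => u (s • ω))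
      (g' := fun s => fderiv ℝ u (s • ω) ω) (by norm_num) hr0 hr1
      (hdiff.continuous.comp (by fun_prop)).continuousOn (fun s _ => ?_) (fun s _ => ?_)
      hgrad.integrableOn_Icc
    · exact (hdiff _).hasFDerivAt.comp_hasDerivAt s
        (by simpa using (hasDerivAt_id s).smul_const ω)
    · simpa [pd, mem_sphere_zero_iff_norm.mp hω] using
        (fderiv ℝ u (s • ω)).norm_apply_sq_le_norm_sq_mul_sum ω
  have hsub : ∫ s in r..1, s ^ 4 * ∑ i : Fin 5, ‖pd i u (s • ω)‖ ^ 2 ≤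
      ∫ s in (0 : ℝ)..1, s ^ 4 * ∑ i : Fin 5, ‖pd i u (s • ω)‖ ^ 2 :=
    intervalIntegral.integral_mono_interval hr0 hr1 le_rfl
      (Filter.Eventually.of_forall fun s => by positivity) (hgrad.intervalIntegrable 0 1)
  rw [one_smul] at hray
  linarith [sq_nonneg ‖u ω‖]

end
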